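/- arXiv:1910.07672 — 4 statements merged into one kernel-verified Lean document; each statement's English description precedes it below -/
import Mathlib

section
/- Let opt be a monotone function on finite subsets of a scenario set N (opt(M) ≤ opt(N) for M ⊆ N), with support set S = {i ∈ N : opt(N \ {i}) < opt(N)}. If the problem is non-degenerate, i.e., opt(S) = opt(N), then S is the unique essential set, where an essential set is an invariant set (opt(E) = opt(N)) of minimal cardinality among all invariant subsets of N. -/
open Classical in
/-- If the problem is non-degenerate, the support set is the unique essential set. -/
theorem support_unique_essential {ι : Type*} [DecidableEq ι]
    (N : Finset ι) (opt : Finset ι → ℝ)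
    (hmono : ∀ M M' : Finset ι, M ⊆ M' → opt M ≤ opt M')
    (S : Finset ι) (hS : S = N.filter (fun i => opt (N.erase i) < opt N))
    (hnondeg : opt S = opt N) :
    (S ⊆ N ∧ opt S = opt N ∧
      ∀ I : Finset ι, I ⊆ N → opt I = opt N → S.card ≤ I.card) ∧
    (∀ E : Finset ι, E ⊆ N → opt E = opt N →
      (∀ I : Finset ι, I ⊆ N → opt I = opt N → E.card ≤ I.card) → E = S) := by
  have hSN : S ⊆ N := hS ▸ Finset.filter_subset _ _
  have hsub : ∀ I : Finset ι, I ⊆ N → opt I = opt N → S ⊆ I := by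
    intro I hIN hIopt i hiS
    by_contra hiI
    have hi := (Finset.mem_filter.mp (hS ▸ hiS)).2
    have : I ⊆ N.erase i := fun j hj =>
      Finset.mem_erase.mpr ⟨fun h => hiI (h ▸ hj), hIN hj⟩
    have := hmono I (N.erase i) this
    linarith [hIopt ▸ this]
  refine ⟨⟨hSN, hnondeg, fun I hIN hIopt =>
      Finset.card_le_card (hsub I hIN hIopt)⟩, ?_⟩
  intro E hEN hEopt hmin
  exact (Finset.eq_of_subset_of_card_le (hsub E hEN hEopt)
    (hmin S hSN hnondeg)).symm
end

section
/- Let opt be a monotone function on finite subsets of a scenario set N, with support set S = {i ∈ N : opt(N \ {i}) < opt(N)}. If opt(S) = opt(N) (non-degeneracy), then S is the unique irreducible set, where a set R ⊆ N is irreducible if opt(R) = opt(N) and opt(R \ {s}) < opt(R) for every s ∈ R. -/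
open Classical in
/-- If the problem is non-degenerate, the support set is the unique irreducible set. -/
theorem support_unique_irreducible {ι : Type*} [DecidableEq ι]
    (N : Finset ι) (opt : Finset ι → ℝ)
    (hmono : ∀ M M' : Finset ι, M ⊆ M' → opt M ≤ opt M')
    (S : Finset ι) (hS : S = N.filter (fun i => opt (N.erase i) < opt N))
    (hnondeg : opt S = opt N) :
    (S ⊆ N ∧ opt S = opt N ∧ ∀ s ∈ S, opt (S.erase s) < opt S) ∧
    (∀ R : Finset ι, R ⊆ N → opt R = opt N →
      (∀ s ∈ R, opt (R.erase s) < opt R) → R = S) := by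
  have hSN : S ⊆ N := by rw [hS]; exact Finset.filter_subset _ _
  constructor
  · refine ⟨hSN, hnondeg, ?_⟩
    intro s hs
    have hs' := hs
    rw [hS, Finset.mem_filter] at hs'
    have h1 : opt (S.erase s) ≤ opt (N.erase s) :=
      hmono _ _ (Finset.erase_subset_erase _ hSN)
    calc opt (S.erase s) ≤ opt (N.erase s) := h1
      _ < opt N := hs'.2
      _ = opt S := hnondeg.symm
  · intro R hRN hRopt hRirr
    have hSR : S ⊆ R := by
      intro i hi
      rw [hS, Finset.mem_filter] at hi
      by_contra hiR
      have : R ⊆ N.erase i := fun x hx =>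
        Finset.mem_erase.mpr ⟨fun h => hiR (h ▸ hx), hRN hx⟩
      have := hmono _ _ this
      linarith [hi.2]
    apply Finset.Subset.antisymm _ hSR
    intro s hs
    rw [hS, Finset.mem_filter]
    refine ⟨hRN hs, ?_⟩
    by_contra h
    push_neg at h
    have hsS : s ∉ S := by
      rw [hS, Finset.mem_filter]
      intro hc
      exact absurd hc.2 (not_lt.mpr h)
    have : S ⊆ R.erase s := fun x hx =>
      Finset.mem_erase.mpr ⟨fun he => hsS (he ▸ hx), hSR hx⟩
    have h1 := hmono _ _ this
    have h2 := hRirr s hs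
    linarith [hnondeg, hRopt]
end

section
/- Define ε(N,k,β) = 1 − (β / (N · C(N,k)))^{1/(N−k)} for 1 ≤ k < N and β ∈ (0,1), and ε(N,N,β) = 1. Then ε(N,k,β) is monotonically increasing in k: for all 1 ≤ k < N, ε(N,k,β) ≤ ε(N,k+1,β). -/
/-!
Write `N = k + j + 1` and `D k = N * C(N, k)`. For `j ≥ 1` the claim
`(β / D (k+1)) ^ (1/j) ≤ (β / D k) ^ (1/(j+1))` follows, after raising both sides to the power
`j (j+1)`, from `β ≤ 1` and `D k ^ j ≤ D (k+1) ^ (j+1)`. Since `(k+1) D (k+1) = (j+1) D k`, the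
latter reduces to `(k+1)^(j+1) ≤ (j+1)^(j+1) D k`, which holds because
`(N/(j+1))^(j+1) ≤ C(N, j+1) = C(N, k)`.
-/

noncomputable def eps (N k : ℕ) (β : ℝ) : ℝ :=
  if k = N then 1
  else 1 - (β / (N * (N.choose k))) ^ ((1 : ℝ) / ((N : ℝ) - (k : ℝ)))

open Finset

namespace Nat

theorem pow_le_pow_mul_choose {n r : ℕ} (hrn : r ≤ n) : n ^ r ≤ r ^ r * n.choose r := by
  have hprod : n ^ r * r ! ≤ r ^ r * n.descFactorial r := by
    have hleft : n ^ r * r ! = ∏ i ∈ range r, n * (r - i) := by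
      rw [prod_mul_distrib, prod_const, card_range, ← descFactorial_self,
        descFactorial_eq_prod_range]
    have hright : r ^ r * n.descFactorial r = ∏ i ∈ range r, r * (n - i) := by
      rw [prod_mul_distrib, prod_const, card_range, descFactorial_eq_prod_range]
    rw [hleft, hright]
    refine prod_le_prod' fun i _ => ?_
    rw [Nat.mul_sub, Nat.mul_sub, Nat.mul_comm r n]
    exact Nat.sub_le_sub_left (Nat.mul_le_mul_right i hrn) _
  rw [descFactorial_eq_factorial_mul_choose, Nat.mul_left_comm, Nat.mul_comm (n ^ r)] at hprod
  exact Nat.le_of_mul_le_mul_left hprod (factorial_pos r)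

theorem mul_choose_pow_le_mul_choose_succ_pow {N k j : ℕ} (hN : N = k + j + 1) :
    (N * N.choose k) ^ j ≤ (N * N.choose (k + 1)) ^ (j + 1) := by
  have hpascal : N.choose (k + 1) * (k + 1) = N.choose k * (j + 1) := by
    rw [choose_succ_right_eq]; congr 1; omega
  have hbound : (k + 1) ^ (j + 1) ≤ (j + 1) ^ (j + 1) * N.choose k :=
    calc (k + 1) ^ (j + 1) ≤ N ^ (j + 1) := Nat.pow_le_pow_left (by omega) _
      _ ≤ (j + 1) ^ (j + 1) * N.choose (j + 1) := pow_le_pow_mul_choose (by omega)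
      _ = (j + 1) ^ (j + 1) * N.choose k := by
          rw [choose_symm_of_eq_add (a := j + 1) (b := k) (by omega)]
  refine Nat.le_of_mul_le_mul_left ?_ (Nat.pow_pos (n := j + 1) k.succ_pos)
  calc (k + 1) ^ (j + 1) * (N * N.choose k) ^ j
      ≤ (j + 1) ^ (j + 1) * N.choose k * N * (N * N.choose k) ^ j := by
        gcongr; exact hbound.trans (Nat.le_mul_of_pos_right _ (by omega))
    _ = (N * (N.choose k * (j + 1))) ^ (j + 1) := by
        simp only [mul_pow, pow_succ]; ring
    _ = (k + 1) ^ (j + 1) * (N * N.choose (k + 1)) ^ (j + 1) := by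
        rw [← hpascal, ← mul_assoc, mul_pow, mul_comm]

end Nat

namespace Real

theorem rpow_one_div_le_rpow_one_div_of_pow_le {a b : ℝ} {m n : ℕ} (ha : 0 ≤ a) (hb : 0 ≤ b)
    (hm : 0 < m) (hn : 0 < n) (h : b ^ m ≤ a ^ n) :
    b ^ (1 / (n : ℝ)) ≤ a ^ (1 / (m : ℝ)) := by
  have hroot {x : ℝ} (hx : 0 ≤ x) (p q : ℕ) (hp : 0 < p) :
      x ^ (1 / (q : ℝ)) = (x ^ p) ^ (1 / ((p * q : ℕ) : ℝ)) := by
    rw [← rpow_natCast, ← rpow_mul hx]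
    have : (p : ℝ) ≠ 0 := by positivity
    push_cast
    field_simp
  rw [hroot hb m n hm, hroot ha n m hn, Nat.mul_comm]
  exact rpow_le_rpow (pow_nonneg hb m) h (by positivity)

theorem div_rpow_one_div_le_div_rpow_one_div {β x y : ℝ} {m n : ℕ}
    (hβ0 : 0 ≤ β) (hβ1 : β ≤ 1) (hx : 0 < x) (hy : 0 ≤ y) (hn : 0 < n) (hnm : n ≤ m) (hxy : x ^ n ≤ y ^ m) :
    (β / y) ^ (1 / (n : ℝ)) ≤ (β / x) ^ (1 / (m : ℝ)) := by
  refine rpow_one_div_le_rpow_one_div_of_pow_le (by positivity) (by positivity)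
    (hn.trans_le hnm) hn ?_
  rw [div_pow, div_pow]
  exact div_le_div₀ (by positivity) (pow_le_pow_of_le_one hβ0 hβ1 hnm) (by positivity) hxy

end Real

theorem eps_mono_k_general (N k : ℕ) (hkN : k < N)
    (β : ℝ) (hβ0 : 0 < β) (hβ1 : β < 1) :
    eps N k β ≤ eps N (k + 1) β := by
  obtain ⟨j, hN⟩ := Nat.exists_eq_add_of_lt hkN
  have hD (i : ℕ) (hi : i ≤ N) : (0 : ℝ) < N * N.choose i := by
    have := Nat.choose_pos hi
    have : 0 < N := by omega
    positivity
  rw [eps, if_neg hkN.ne]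
  rcases j with _ | j
  · rw [eps, if_pos hN.symm]
    have := Real.rpow_nonneg (div_pos hβ0 (hD k hkN.le)).le (1 / ((N : ℝ) - k))
    linarith
  rw [eps, if_neg (by omega)]
  have hexp (i n : ℕ) (hi : N = i + n) : (N : ℝ) - i = n := by
    rw [hi]; push_cast; ring
  rw [hexp k (j + 2) (by omega), hexp (k + 1) (j + 1) (by omega)]
  gcongr 1 - ?_
  refine Real.div_rpow_one_div_le_div_rpow_one_div hβ0.le hβ1.le (hD k hkN.le)
    (hD (k + 1) hkN).le j.succ_pos (by omega) ?_
  exact_mod_cast Nat.mul_choose_pow_le_mul_choose_succ_pow hN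

/-- ε(N,k,β) is monotonically increasing in k. -/
theorem eps_mono_k (N k : ℕ) (hk1 : 1 ≤ k) (hkN : k < N)
    (β : ℝ) (hβ0 : 0 < β) (hβ1 : β < 1) :
    eps N k β ≤ eps N (k + 1) β :=
  eps_mono_k_general N k hkN β hβ0 hβ1
end

section
/- Define ε(N,k,β) = 1 − (β / (N · C(N,k)))^{1/(N−k)} for natural numbers 1 ≤ k < N and real β ∈ (0,1), and ε(N,N,β) = 1. Then ε is monotonically decreasing in N: for all N ≥ k, ε(N+1,k,β) ≤ ε(N,k,β). -/
theorem Nat.pow_le_self_pow_mul_choose {n k : ℕ} (h : k ≤ n) : n ^ k ≤ k ^ k * n.choose k := by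
  induction k generalizing n with
  | zero => simp
  | succ k ih =>
    obtain ⟨n, rfl⟩ := Nat.exists_eq_add_of_le' (Nat.one_le_of_lt h)
    have hkn : k ≤ n := by omega
    suffices (n + 1) ^ k * k ^ k ≤ (k + 1) ^ k * n.choose k * k ^ k by
      calc (n + 1) ^ (k + 1) = (n + 1) ^ k * (n + 1) := pow_succ _ _
        _ ≤ (k + 1) ^ k * n.choose k * (n + 1) := by
          gcongr; exact Nat.le_of_mul_le_mul_right this Nat.pow_self_pos
        _ = (k + 1) ^ (k + 1) * (n + 1).choose (k + 1) := by
          rw [mul_assoc, mul_comm _ (n + 1), Nat.add_one_mul_choose_eq]; ring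
    have hratio : (n + 1) * k ≤ (k + 1) * n := by nlinarith
    calc (n + 1) ^ k * k ^ k = ((n + 1) * k) ^ k := (mul_pow _ _ _).symm
      _ ≤ ((k + 1) * n) ^ k := Nat.pow_le_pow_left hratio k
      _ = (k + 1) ^ k * n ^ k := mul_pow _ _ _
      _ ≤ (k + 1) ^ k * (k ^ k * n.choose k) := by gcongr; exact ih hkn
      _ = (k + 1) ^ k * n.choose k * k ^ k := by ring

theorem Nat.succ_pow_le_pow_succ {N m : ℕ} (h : m < N) : (N + 1) ^ m ≤ N ^ (m + 1) := by
  have hN : (0 : ℝ) < N + 1 := by positivity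
  have hmN : (m : ℝ) + 2 ≤ N + 1 := by exact_mod_cast (show m + 2 ≤ N + 1 by omega)
  have hbern : (N + 1 - m) * (N + 1) ^ m ≤ (N : ℝ) ^ m * (N + 1) := by
    have := one_add_mul_sub_le_pow (a := (N : ℝ) / (N + 1))
      (by linarith [show (0 : ℝ) ≤ N / (N + 1) by positivity]) m
    rwa [div_pow, show 1 + m * (N / (N + 1) - 1 : ℝ) = (N + 1 - m) / (N + 1) by field_simp; ring,
      div_le_div_iff₀ hN (by positivity)] at this
  suffices (2 : ℝ) * (N + 1) ^ m ≤ 2 * N ^ (m + 1) by exact_mod_cast le_of_mul_le_mul_left this two_pos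
  calc (2 : ℝ) * (N + 1) ^ m ≤ (N + 1 - m) * (N + 1) ^ m := by gcongr; linarith
    _ ≤ N ^ m * (N + 1) := hbern
    _ ≤ N ^ m * (2 * N) := by gcongr; linarith
    _ = 2 * N ^ (m + 1) := by ring

theorem Nat.succ_sq_pow_mul_pow_le {N m : ℕ} (h : m < N) :
    (N + 1) ^ (2 * m) * m ^ m ≤ N ^ (2 * m + 1) * (m + 1) ^ m := by
  have hratio : (N + 1) * m ≤ N * (m + 1) := by nlinarith
  calc (N + 1) ^ (2 * m) * m ^ m = ((N + 1) * m) ^ m * (N + 1) ^ m := by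
        rw [mul_pow, two_mul, pow_add]; ring
    _ ≤ (N * (m + 1)) ^ m * N ^ (m + 1) :=
      Nat.mul_le_mul (Nat.pow_le_pow_left hratio m) (Nat.succ_pow_le_pow_succ h)
    _ = N ^ (2 * m + 1) * (m + 1) ^ m := by rw [mul_pow, two_mul, pow_add, pow_succ]; ring

theorem Nat.succ_mul_choose_pow_le {k m : ℕ} (hk : 1 ≤ k) :
    ((k + m + 1) * (k + m + 1).choose k) ^ m ≤ ((k + m) * (k + m).choose k) ^ (m + 1) := by
  have hC : (k + m) ^ m ≤ m ^ m * (k + m).choose k := by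
    rw [Nat.choose_symm_add]; exact Nat.pow_le_self_pow_mul_choose (by omega)
  have hsucc : (k + m + 1).choose k * (m + 1) = (k + m).choose k * (k + m + 1) := by
    rw [Nat.choose_mul_succ_eq]; congr 1; omega
  have hsq := Nat.succ_sq_pow_mul_pow_le (show m < k + m by omega)
  have hpos : 0 < (m + 1) ^ m * m ^ m := Nat.mul_pos (Nat.pow_pos m.succ_pos) Nat.pow_self_pos
  -- `ring` cannot split a power of a sum, so the sums become atoms.
  generalize k + m = N at *
  generalize N.choose k = C at *
  generalize (N + 1).choose k = D at *
  generalize N + 1 = a at *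
  rw [pow_succ]
  generalize m + 1 = s at *
  refine Nat.le_of_mul_le_mul_right ?_ hpos
  calc (a * D) ^ m * (s ^ m * m ^ m) = (a * (D * s)) ^ m * m ^ m := by ring
    _ = a ^ (2 * m) * m ^ m * C ^ m := by rw [hsucc]; ring
    _ ≤ N ^ (2 * m + 1) * s ^ m * C ^ m := by gcongr
    _ = N ^ (m + 1) * C ^ m * s ^ m * N ^ m := by ring
    _ ≤ N ^ (m + 1) * C ^ m * s ^ m * (m ^ m * C) := by gcongr
    _ = (N * C) ^ m * (N * C) * (s ^ m * m ^ m) := by ring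

theorem Real.rpow_one_div_le_rpow_one_div_of_pow_le_s7 {x y : ℝ} {p q : ℕ} (hx : 0 ≤ x) (hy : 0 ≤ y)
    (hp : p ≠ 0) (hq : q ≠ 0) (h : x ^ q ≤ y ^ p) :
    x ^ (1 / p : ℝ) ≤ y ^ (1 / q : ℝ) := by
  calc x ^ (1 / p : ℝ) = (x ^ q) ^ (1 / (p * q) : ℝ) := by
        rw [← Real.rpow_natCast, ← Real.rpow_mul hx]; congr 1; field_simp
    _ ≤ (y ^ p) ^ (1 / (p * q) : ℝ) := by gcongr
    _ = y ^ (1 / q : ℝ) := by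
        rw [← Real.rpow_natCast, ← Real.rpow_mul hy]; congr 1; field_simp

theorem div_pow_succ_le_div_pow {β a b : ℝ} {m : ℕ} (hβ0 : 0 ≤ β) (hβ1 : β ≤ 1) (ha : 0 < a)
    (hb : 0 < b) (h : b ^ m ≤ a ^ (m + 1)) : (β / a) ^ (m + 1) ≤ (β / b) ^ m := by
  rw [div_pow, div_pow, div_le_div_iff₀ (by positivity) (by positivity)]
  calc β ^ (m + 1) * b ^ m ≤ β ^ m * b ^ m :=
      mul_le_mul_of_nonneg_right (pow_le_pow_of_le_one hβ0 hβ1 m.le_succ) (by positivity)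
    _ ≤ β ^ m * a ^ (m + 1) := by gcongr

theorem eps_self (N : ℕ) (β : ℝ) : eps N N β = 1 := if_pos rfl

theorem eps_le_one (N k : ℕ) {β : ℝ} (hβ : 0 ≤ β) : eps N k β ≤ 1 := by
  unfold eps
  split_ifs
  · rfl
  · exact sub_le_self _ (Real.rpow_nonneg (by positivity) _)

theorem eps_add_of_ne_zero {k m : ℕ} (hm : m ≠ 0) (β : ℝ) :
    eps (k + m) k β = 1 - (β / ((k + m : ℕ) * (k + m).choose k)) ^ (1 / m : ℝ) := by
  rw [eps, if_neg (by omega), Nat.cast_add k m, add_sub_cancel_left]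

/-- ε(N,k,β) is monotonically decreasing in N. -/
theorem eps_anti_N (N k : ℕ) (hk1 : 1 ≤ k) (hkN : k ≤ N)
    (β : ℝ) (hβ0 : 0 < β) (hβ1 : β < 1) :
    eps (N + 1) k β ≤ eps N k β := by
  obtain ⟨m, rfl⟩ := Nat.exists_eq_add_of_le hkN
  rcases Nat.eq_zero_or_pos m with rfl | hm
  · rw [add_zero, eps_self]
    exact eps_le_one _ _ hβ0.le
  have hA : (0 : ℝ) < (k + m : ℕ) * (k + m).choose k := by
    have := Nat.choose_pos (Nat.le_add_right k m); positivity
  have hA' : (0 : ℝ) < (k + (m + 1) : ℕ) * (k + (m + 1)).choose k := by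
    have := Nat.choose_pos (Nat.le_add_right k (m + 1)); positivity
  rw [add_assoc, eps_add_of_ne_zero hm.ne', eps_add_of_ne_zero m.succ_ne_zero]
  refine sub_le_sub_left (Real.rpow_one_div_le_rpow_one_div_of_pow_le_s7 (by positivity)
    (by positivity) hm.ne' m.succ_ne_zero (div_pow_succ_le_div_pow hβ0.le hβ1.le hA hA' ?_)) 1
  rw [← add_assoc]
  exact_mod_cast Nat.succ_mul_choose_pow_le hk1
end
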